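/- Let f: G → G' be a closed immersion of smooth affine group schemes over a curve C over 𝔽_q. Then the diagonal morphism Δ of the induced morphism f_*: H¹(C,G) → H¹(C,G') of stacks of torsors, Δ: H¹(C,G) → H¹(C,G) ×_{H¹(C,G')} H¹(C,G), is a monomorphism of stacks; i.e., for every 𝔽_q-scheme S the functor Δ_S on fiber categories is fully faithful. -/

import Mathlib

universe u

open CategoryTheory CategoryTheory.Limits AlgebraicGeometry Opposite

/-- A presheaf of sets on the big étale site of `X` with a right action of a presheaf
of groups `G`. -/
structure ActionPresheaf (X : Scheme.{u}) (G : (Over X)ᵒᵖ ⥤ GrpCat.{u}) where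
  P : (Over X)ᵒᵖ ⥤ Type u
  act : ∀ T : (Over X)ᵒᵖ, P.obj T → (G.obj T) → P.obj T
  act_one : ∀ T x, act T x 1 = x
  act_mul : ∀ T x g h, act T x (g * h) = act T (act T x g) h
  naturality : ∀ {T T' : (Over X)ᵒᵖ} (f : T ⟶ T') (x : P.obj T) (g : G.obj T),
    P.map f (act T x g) = act T' (P.map f x) (G.map f g)

/-- The torsor condition on the big étale site. -/
def IsTorsor {X : Scheme.{u}} {G : (Over X)ᵒᵖ ⥤ GrpCat.{u}} (A : ActionPresheaf X G) : Prop :=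
  (∀ T, Function.Bijective
      (fun p : (G.obj T) × A.P.obj T => (A.act T p.2 p.1, p.2))) ∧
  (∃ (U : Scheme.{u}) (u : U ⟶ X), IsEtale u ∧ Surjective u ∧
      Nonempty (A.P.obj (op (Over.mk u))))

/-- The relation defining the contracted product `𝒢 ×^G G'`. -/
def CPRel {X : Scheme.{u}} {Ghat G'hat : (Over X)ᵒᵖ ⥤ GrpCat.{u}} (f : Ghat ⟶ G'hat)
    (A : ActionPresheaf X Ghat) (T : (Over X)ᵒᵖ) :
    (A.P.obj T × (G'hat.obj T)) → (A.P.obj T × (G'hat.obj T)) → Prop :=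
  fun a b => ∃ h : Ghat.obj T, a.1 = A.act T b.1 h ∧ a.2 = (f.app T h)⁻¹ * b.2

/-- Sections over `T` of the contracted product `f_*𝒢 = 𝒢 ×^G G'`. -/
def CP {X : Scheme.{u}} {Ghat G'hat : (Over X)ᵒᵖ ⥤ GrpCat.{u}} (f : Ghat ⟶ G'hat)
    (A : ActionPresheaf X Ghat) (T : (Over X)ᵒᵖ) : Type u :=
  Quot (CPRel f A T)

/-- The map induced on contracted products by an equivariant morphism of torsors. -/
def cpMap {X : Scheme.{u}} {Ghat G'hat : (Over X)ᵒᵖ ⥤ GrpCat.{u}} (f : Ghat ⟶ G'hat)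
    (A B : ActionPresheaf X Ghat) (φ : A.P ⟶ B.P)
    (hφ : ∀ T x g, φ.app T (A.act T x g) = B.act T (φ.app T x) g) (T : (Over X)ᵒᵖ) :
    CP f A T → CP f B T :=
  Quot.map (fun a => (φ.app T a.1, a.2)) (by
    rintro a b ⟨h, h1, h2⟩
    exact ⟨h, by simp only []; rw [h1]; exact hφ T b.1 h, h2⟩)


/-!
Two equivariant morphisms `φ, ψ : 𝒢 → 𝒢'` inducing the same map on contracted products send
`[x, 1]` to the same class, so `(φ x, 1) ~ (ψ x, 1)`: there is `h` with `φ x = ψ x · h` and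
`f h = 1`. Since `f` is a closed immersion it is a monomorphism, hence injective on points,
so `h = 1` and `φ x = ψ x`.
-/

section ContractedProduct

variable {X : Scheme.{u}} {Ghat G'hat : (Over X)ᵒᵖ ⥤ GrpCat.{u}} (f : Ghat ⟶ G'hat)

theorem CPRel.equivalence (A : ActionPresheaf X Ghat) (T : (Over X)ᵒᵖ) :
    Equivalence (CPRel f A T) where
  refl _ := ⟨1, by rw [A.act_one], by simp⟩
  symm := by
    rintro a b ⟨h, h1, h2⟩
    exact ⟨h⁻¹, by rw [h1, ← A.act_mul, mul_inv_cancel, A.act_one],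
      by rw [h2]; simp⟩
  trans := by
    rintro a b c ⟨h, h1, h2⟩ ⟨h', h1', h2'⟩
    exact ⟨h' * h, by rw [h1, h1', A.act_mul], by rw [h2, h2']; simp [mul_assoc]⟩

theorem eq_of_cpMap_eq (hf : ∀ T, Function.Injective (f.app T))
    (A B : ActionPresheaf X Ghat) (φ ψ : A.P ⟶ B.P)
    (hφ : ∀ T x g, φ.app T (A.act T x g) = B.act T (φ.app T x) g)
    (hψ : ∀ T x g, ψ.app T (A.act T x g) = B.act T (ψ.app T x) g)
    (h : ∀ T, cpMap f A B φ hφ T = cpMap f A B ψ hψ T) : φ = ψ := by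
  ext T x
  have hclass := congrFun (h T) (Quot.mk _ (x, 1))
  obtain ⟨g, hg, hfg⟩ : CPRel f B T (φ.app T x, 1) (ψ.app T x, 1) :=
    (CPRel.equivalence f B T).eqvGen_iff.mp (Quot.eq.mp hclass)
  have hg_one : g = 1 := hf T (by simpa using hfg)
  change φ.app T x = ψ.app T x
  rw [show φ.app T x = _ from hg, hg_one, B.act_one]

end ContractedProduct

theorem app_injective_of_mono_of_represented {X : Scheme.{u}}
    {Ghat G'hat : (Over X)ᵒᵖ ⥤ GrpCat.{u}} (f : Ghat ⟶ G'hat) {G G' : Over X} (fs : G ⟶ G') [Mono fs]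
    (e : (Ghat ⋙ forget GrpCat) ≅ yoneda.obj G) (e' : (G'hat ⋙ forget GrpCat) ≅ yoneda.obj G')
    (hcompat : Functor.whiskerRight f (forget GrpCat) ≫ e'.hom = e.hom ≫ yoneda.map fs)
    (T : (Over X)ᵒᵖ) : Function.Injective (f.app T) := by
  have : Mono (Functor.whiskerRight f (forget GrpCat)) := mono_of_mono_fac hcompat
  exact (mono_iff_injective _).mp ((NatTrans.mono_iff_mono_app _).mp this T)

theorem stmt14_general (k : Type u) [Field k] (C : Scheme.{u})
    (c : C ⟶ Spec (CommRingCat.of k))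
    (Ghat G'hat : (Over C)ᵒᵖ ⥤ GrpCat.{u}) (f : Ghat ⟶ G'hat)
    (G G' : Over C) (fs : G ⟶ G') [IsClosedImmersion fs.left]
    (e : (Ghat ⋙ forget GrpCat) ≅ yoneda.obj G)
    (e' : (G'hat ⋙ forget GrpCat) ≅ yoneda.obj G')
    (hcompat : Functor.whiskerRight f (forget GrpCat) ≫ e'.hom = e.hom ≫ yoneda.map fs) :
    -- for every 𝔽_q-scheme S, with C_S = C ×_k S and the groups restricted to C_S …
    ∀ (S : Scheme.{u}) (sS : S ⟶ Spec (CommRingCat.of k)),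
      ∀ (A B : ActionPresheaf (pullback c sS)
          ((Over.map (pullback.fst c sS)).op ⋙ Ghat)),
        IsTorsor A → IsTorsor B →
        ∀ (φ ψ : A.P ⟶ B.P)
          (hφ : ∀ T x g, φ.app T (A.act T x g) = B.act T (φ.app T x) g)
          (hψ : ∀ T x g, ψ.app T (A.act T x g) = B.act T (ψ.app T x) g),
          IsIso φ → IsIso ψ →
          (∀ T, cpMap (Functor.whiskerLeft (Over.map (pullback.fst c sS)).op f) A B φ hφ T =
                cpMap (Functor.whiskerLeft (Over.map (pullback.fst c sS)).op f) A B ψ hψ T) →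
          φ = ψ := by
  intro S sS A B _ _ φ ψ hφ hψ _ _ hcp
  have : Mono fs := (Over.forget C).mono_of_mono_map (inferInstanceAs (Mono fs.left))
  exact eq_of_cpMap_eq (Functor.whiskerLeft _ f)
    (fun _ => app_injective_of_mono_of_represented f fs e e' hcompat _) A B φ ψ hφ hψ hcp

/-- Let `f : G → G'` be a closed immersion of smooth affine group schemes
over a curve `C` over `𝔽_q = k`.  The diagonal of the induced morphism
`f_* : H¹(C,G) → H¹(C,G')` of stacks of torsors is a monomorphism: for every `𝔽_q`-scheme
`S` the functor `Δ_S` on fibre categories (groupoids of torsors on `C_S = C ×_k S`) is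
fully faithful.  Concretely: for any two `G`-torsors `𝒢, 𝒢'` on `C_S` and any two
(iso)morphisms `φ, ψ : 𝒢 → 𝒢'` of torsors inducing the same morphism
`f_*𝒢 → f_*𝒢'` of contracted products, one has `φ = ψ`, which is exactly full
faithfulness of `Δ_S : 𝒢 ↦ (𝒢, 𝒢, id_{f_*𝒢})`. -/
theorem stmt14 (k : Type u) [Field k] (C : Scheme.{u})
    (c : C ⟶ Spec (CommRingCat.of k)) [IrreducibleSpace C]
    (Ghat G'hat : (Over C)ᵒᵖ ⥤ GrpCat.{u}) (f : Ghat ⟶ G'hat)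
    (G G' : Over C) [Smooth G.hom] [IsAffineHom G.hom] [Smooth G'.hom]
    [IsAffineHom G'.hom] (fs : G ⟶ G') [IsClosedImmersion fs.left]
    (e : (Ghat ⋙ forget GrpCat) ≅ yoneda.obj G)
    (e' : (G'hat ⋙ forget GrpCat) ≅ yoneda.obj G')
    (hcompat : Functor.whiskerRight f (forget GrpCat) ≫ e'.hom = e.hom ≫ yoneda.map fs) :
    -- for every 𝔽_q-scheme S, with C_S = C ×_k S and the groups restricted to C_S …
    ∀ (S : Scheme.{u}) (sS : S ⟶ Spec (CommRingCat.of k)),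
      ∀ (A B : ActionPresheaf (pullback c sS)
          ((Over.map (pullback.fst c sS)).op ⋙ Ghat)),
        IsTorsor A → IsTorsor B →
        ∀ (φ ψ : A.P ⟶ B.P)
          (hφ : ∀ T x g, φ.app T (A.act T x g) = B.act T (φ.app T x) g)
          (hψ : ∀ T x g, ψ.app T (A.act T x g) = B.act T (ψ.app T x) g),
          IsIso φ → IsIso ψ →
          (∀ T, cpMap (Functor.whiskerLeft (Over.map (pullback.fst c sS)).op f) A B φ hφ T =
                cpMap (Functor.whiskerLeft (Over.map (pullback.fst c sS)).op f) A B ψ hψ T) →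
          φ = ψ :=
  stmt14_general k C c Ghat G'hat f G G' fs e e' hcompat
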